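/- arXiv:2110.14182 — 2 statements merged into one kernel-verified Lean document; each statement's English description precedes it below -/
import Mathlib

section
/- Let K ≥ 2 and let μ be a probability measure on ℝ^K such that for every k ∈ {1,…,K}, the set {v ∈ ℝ^K : v_k = (1/K) Σ_{i=1}^K v_i} has μ-measure zero. For v ∈ ℝ^K with mean v̄, set w_k = v_k − v̄, w_k⁺ = max(0, w_k), w_k⁻ = max(0, −w_k), and m_k = e^{−w_k⁻}(e^{w_k⁺} − 1 + ∏_{ℓ≠k}(1 − e^{−w_ℓ⁻})). Then for μ-almost every v ∈ ℝ^K and every k ∈ {1,…,K}, 𝟙{m_k ≠ 0}·e^{w_k} / Σ_{ℓ=1}^K 𝟙{m_ℓ ≠ 0}·e^{w_ℓ} = EvSoftmax(v)_k. -/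
/-!
Put `w = v - v̄`. A factor `1 - e^{-w_ℓ⁻}` vanishes exactly when `w_ℓ ≥ 0`, and `e^{w_k⁺} - 1`
vanishes exactly when `w_k ≤ 0`. Since the `w_ℓ` sum to zero, a negative `w_k` forces some other
`w_ℓ` to be positive, so `m_k = 0`; a positive `w_k` gives `m_k > 0`. Off the hyperplanes
`w_k = 0` the mask `𝟙{m_k ≠ 0}` is therefore `𝟙{v_k ≥ v̄}`, and a masked softmax does not see
the shift by `v̄`.
-/

open Finset MeasureTheory

/-- The ev-softmax function:
`EvSoftmax(v)_k = 𝟙{v_k ≥ v̄} e^{v_k} / ∑_l 𝟙{v_l ≥ v̄} e^{v_l}`,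
where `v̄` is the arithmetic mean of `v`. -/
noncomputable def evSoftmax {K : ℕ} (v : Fin K → ℝ) (k : Fin K) : ℝ :=
  (if (∑ i : Fin K, v i) / K ≤ v k then Real.exp (v k) else 0) /
    ∑ l : Fin K, (if (∑ i : Fin K, v i) / K ≤ v l then Real.exp (v l) else 0)

open Real

noncomputable section

variable {ι : Type*} [Fintype ι]

def maskedSoftmax (p : ι → Prop) [DecidablePred p] (x : ι → ℝ) (k : ι) : ℝ :=
  (if p k then exp (x k) else 0) / ∑ l, if p l then exp (x l) else 0

theorem maskedSoftmax_sub_const (p : ι → Prop) [DecidablePred p] (x : ι → ℝ) (c : ℝ) :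
    maskedSoftmax p (fun l => x l - c) = maskedSoftmax p x := by
  have hshift : ∀ l, (if p l then exp (x l - c) else 0) = exp (-c) * if p l then exp (x l) else 0 :=
    fun l => by split_ifs <;> simp [sub_eq_neg_add, exp_add]
  funext k
  simp only [maskedSoftmax, hshift, ← mul_sum, mul_div_mul_left _ _ (exp_ne_zero _)]

theorem maskedSoftmax_congr {p q : ι → Prop} [DecidablePred p] [DecidablePred q]
    (h : ∀ l, p l ↔ q l) (x : ι → ℝ) : maskedSoftmax p x = maskedSoftmax q x := by
  funext k
  simp only [maskedSoftmax, h]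

variable [DecidableEq ι]

def beliefMass (w : ι → ℝ) (k : ι) : ℝ :=
  exp (-max 0 (-w k)) * (exp (max 0 (w k)) - 1 + ∏ l ∈ univ.erase k, (1 - exp (-max 0 (-w l))))

theorem beliefMass_pos {w : ι → ℝ} {k : ι} (hk : 0 < w k) : 0 < beliefMass w k := by
  have hfactor : ∀ l, 0 ≤ 1 - exp (-max 0 (-w l)) := fun l =>
    sub_nonneg.2 (exp_le_one_iff.2 (neg_nonpos.2 (le_max_left _ _)))
  have hexp : 1 < exp (max 0 (w k)) := one_lt_exp_iff.2 (lt_max_of_lt_right hk)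
  exact mul_pos (exp_pos _) (by linarith [prod_nonneg fun l (_ : l ∈ univ.erase k) => hfactor l])

theorem beliefMass_eq_zero {w : ι → ℝ} {k l : ι} (hk : w k ≤ 0) (hlk : l ≠ k) (hl : 0 ≤ w l) :
    beliefMass w k = 0 := by
  have hfactor : 1 - exp (-max 0 (-w l)) = 0 := by simp [max_eq_left (neg_nonpos.2 hl)]
  simp [beliefMass, max_eq_left hk,
    prod_eq_zero (f := fun l => 1 - exp (-max 0 (-w l))) (mem_erase.2 ⟨hlk, mem_univ l⟩) hfactor]

theorem beliefMass_ne_zero_iff {w : ι → ℝ} (hsum : ∑ l, w l = 0) {k : ι} (hk : w k ≠ 0) :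
    beliefMass w k ≠ 0 ↔ 0 ≤ w k := by
  rcases hk.lt_or_gt with hneg | hpos
  · obtain ⟨l, -, hl⟩ := exists_pos_of_sum_zero_of_exists_nonzero w hsum ⟨k, mem_univ k, hk⟩
    have hlk : l ≠ k := fun h => (h ▸ hl).not_gt hneg
    simp [beliefMass_eq_zero hneg.le hlk hl.le, hneg.not_ge]
  · simp [(beliefMass_pos hpos).ne', hpos.le]

end

theorem evSoftmax_eq_maskedSoftmax {K : ℕ} (v : Fin K → ℝ) :
    evSoftmax v = maskedSoftmax (fun l => (∑ i, v i) / K ≤ v l) v :=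
  rfl

theorem maskedSoftmax_beliefMass_eq_evSoftmax {K : ℕ} (v : Fin K → ℝ)
    (hv : ∀ j, v j ≠ (∑ i, v i) / K) :
    maskedSoftmax (fun l => beliefMass (fun i => v i - (∑ i, v i) / K) l ≠ 0)
      (fun i => v i - (∑ i, v i) / K) = evSoftmax v := by
  have hsum : ∑ l, (v l - (∑ i, v i) / K) = 0 := by
    simpa [Fintype.balance_apply, expect_eq_sum_div_card] using Fintype.sum_balance v
  rw [maskedSoftmax_sub_const, evSoftmax_eq_maskedSoftmax]
  exact maskedSoftmax_congr
    (fun l => (beliefMass_ne_zero_iff hsum (sub_ne_zero.2 (hv l))).trans sub_nonneg) v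

theorem posthoc_evidential_eq_evSoftmax_ae_general
    (K : ℕ)
    (μ : Measure (Fin K → ℝ))
    (hμ : ∀ k : Fin K, μ {v | v k = (∑ i : Fin K, v i) / K} = 0) :
    ∀ᵐ v ∂μ, ∀ k : Fin K,
      (fun (w : Fin K → ℝ) (m : Fin K → ℝ) =>
        (if m k ≠ 0 then Real.exp (w k) else 0) /
          ∑ l : Fin K, (if m l ≠ 0 then Real.exp (w l) else 0))
        (fun k => v k - (∑ i : Fin K, v i) / K)
        (fun k => Real.exp (-(max (0:ℝ) (-(v k - (∑ i : Fin K, v i) / K)))) *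
          (Real.exp (max (0:ℝ) (v k - (∑ i : Fin K, v i) / K)) - 1 +
            ∏ l ∈ univ.erase k,
              (1 - Real.exp (-(max (0:ℝ) (-(v l - (∑ i : Fin K, v i) / K)))))))
      = evSoftmax v k := by
  have hoff : ∀ᵐ v ∂μ, ∀ j : Fin K, v j ≠ ((∑ i : Fin K, v i) / K : ℝ) :=
    ae_all_iff.2 fun j => measure_eq_zero_iff_ae_notMem.1 (hμ j)
  filter_upwards [hoff] with v hv k
  exact congrFun (maskedSoftmax_beliefMass_eq_evSoftmax v hv) k

/-- If `μ` is a probability measure on `ℝ^K` (`K ≥ 2`) assigning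
measure zero to each hyperplane `{v : v k = v̄}`, then for `μ`-almost every `v`
and every `k`, the post-hoc evidential probability built from `w k = v k - v̄`
equals `EvSoftmax(v)_k`. -/
theorem posthoc_evidential_eq_evSoftmax_ae
    (K : ℕ) (hK : 2 ≤ K)
    (μ : Measure (Fin K → ℝ)) [IsProbabilityMeasure μ]
    (hμ : ∀ k : Fin K, μ {v | v k = (∑ i : Fin K, v i) / K} = 0) :
    ∀ᵐ v ∂μ, ∀ k : Fin K,
      (fun (w : Fin K → ℝ) (m : Fin K → ℝ) =>
        (if m k ≠ 0 then Real.exp (w k) else 0) /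
          ∑ l : Fin K, (if m l ≠ 0 then Real.exp (w l) else 0))
        (fun k => v k - (∑ i : Fin K, v i) / K)
        (fun k => Real.exp (-(max (0:ℝ) (-(v k - (∑ i : Fin K, v i) / K)))) *
          (Real.exp (max (0:ℝ) (v k - (∑ i : Fin K, v i) / K)) - 1 +
            ∏ l ∈ univ.erase k,
              (1 - Real.exp (-(max (0:ℝ) (-(v l - (∑ i : Fin K, v i) / K)))))))
      = evSoftmax v k :=
  posthoc_evidential_eq_evSoftmax_ae_general K μ hμ
end

section
/- Let K be a positive integer and let v, u ∈ ℝ^K have the same support under ev-softmax, i.e., {k : v_k ≥ v̄} = {k : u_k ≥ ū}, where v̄ and ū denote the arithmetic means of v and u. Then ‖EvSoftmax(v) − EvSoftmax(u)‖₂ ≤ ‖v − u‖₂, where ‖·‖₂ is the Euclidean norm on ℝ^K; that is, ev-softmax is 1-Lipschitz on each set of inputs sharing a common support. -/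
open Finset

/-!
On the common support `S`, both ev-softmax vectors are the ordinary softmax of the restrictions
to `S`, padded with zeros, so it suffices that softmax is 1-Lipschitz on any finite nonempty index
type. This is the mean value inequality: the Jacobian of softmax at `x` is `diag p - p pᵀ` with
`p = softmax x`, and for `c = ⟨p, w⟩`
`‖(diag p - p pᵀ) w‖² = ∑ pᵢ² (wᵢ - c)² ≤ ∑ pᵢ (wᵢ - c)² = ∑ pᵢ wᵢ² - c² ≤ ‖w‖²`.
-/

section Softmax

variable {ι : Type*} [Fintype ι]

noncomputable def softmax (x : ι → ℝ) (i : ι) : ℝ :=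
  Real.exp (x i) / ∑ j, Real.exp (x j)

theorem sum_sq_mul_sub_sum_mul_le_sum_sq (p w : ι → ℝ) (hp : ∀ i, 0 ≤ p i) (hp1 : ∑ i, p i = 1) :
    ∑ i, (p i * (w i - ∑ j, p j * w j)) ^ 2 ≤ ∑ i, w i ^ 2 := by
  set c := ∑ j, p j * w j
  have hp_le : ∀ i, p i ≤ 1 := fun i => hp1 ▸ single_le_sum (fun j _ => hp j) (mem_univ i)
  have hvar : ∑ i, p i * (w i - c) ^ 2 = ∑ i, p i * w i ^ 2 - c ^ 2 := by
    have hterm : ∀ i, p i * (w i - c) ^ 2 = p i * w i ^ 2 - 2 * c * (p i * w i) + c ^ 2 * p i :=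
      fun i => by ring
    simp only [hterm, sum_add_distrib, sum_sub_distrib, ← mul_sum, hp1]
    ring
  calc ∑ i, (p i * (w i - c)) ^ 2 ≤ ∑ i, p i * (w i - c) ^ 2 := by
        gcongr with i
        rw [mul_pow]
        exact mul_le_mul_of_nonneg_right (by nlinarith [hp i, hp_le i]) (sq_nonneg _)
    _ ≤ ∑ i, p i * w i ^ 2 := by rw [hvar]; linarith [sq_nonneg c]
    _ ≤ ∑ i, w i ^ 2 := by
        gcongr with i
        exact mul_le_of_le_one_left (sq_nonneg _) (hp_le i)

noncomputable def softmaxJacobian (x : ι → ℝ) : EuclideanSpace ℝ ι →L[ℝ] EuclideanSpace ℝ ι :=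
  (PiLp.continuousLinearEquiv 2 ℝ fun _ : ι => ℝ).symm.toContinuousLinearMap ∘L
    ContinuousLinearMap.pi fun i =>
      softmax x i • (EuclideanSpace.proj i - ∑ j, softmax x j • EuclideanSpace.proj j)

theorem softmaxJacobian_apply (x : ι → ℝ) (w : EuclideanSpace ℝ ι) (i : ι) :
    softmaxJacobian x w i = softmax x i * (w i - ∑ j, softmax x j * w j) := by
  simp [softmaxJacobian]

variable [Nonempty ι]

theorem sum_exp_pos (x : ι → ℝ) : 0 < ∑ j, Real.exp (x j) :=
  sum_pos (fun _ _ => Real.exp_pos _) univ_nonempty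

theorem softmax_nonneg (x : ι → ℝ) (i : ι) : 0 ≤ softmax x i :=
  div_nonneg (Real.exp_pos _).le (sum_exp_pos x).le

theorem sum_softmax (x : ι → ℝ) : ∑ i, softmax x i = 1 := by
  simp_rw [softmax, ← sum_div, div_self (sum_exp_pos x).ne']

theorem softmax_eq_exp_sub_log (x : ι → ℝ) (i : ι) :
    softmax x i = Real.exp (x i - Real.log (∑ j, Real.exp (x j))) := by
  rw [Real.exp_sub, Real.exp_log (sum_exp_pos x), softmax]

theorem hasFDerivAt_softmax_apply (x : EuclideanSpace ℝ ι) (i : ι) :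
    HasFDerivAt (fun y : EuclideanSpace ℝ ι => softmax y i)
      (EuclideanSpace.proj i ∘L softmaxJacobian x) x := by
  have hlse : HasFDerivAt (fun y : EuclideanSpace ℝ ι => Real.log (∑ j, Real.exp (y j)))
      (∑ j, softmax x j • (EuclideanSpace.proj j : EuclideanSpace ℝ ι →L[ℝ] ℝ)) x := by
    refine ((HasFDerivAt.fun_sum fun j _ => (PiLp.hasFDerivAt_apply 2 x j).exp).log
      (sum_exp_pos x).ne').congr_fderiv ?_
    simp only [softmax, div_eq_inv_mul, smul_sum, smul_smul]
  simp_rw [softmax_eq_exp_sub_log]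
  refine (((PiLp.hasFDerivAt_apply 2 x i).sub hlse).exp).congr_fderiv ?_
  ext w
  simp [softmaxJacobian, softmax_eq_exp_sub_log]

theorem norm_softmaxJacobian_le_one (x : ι → ℝ) : ‖softmaxJacobian x‖ ≤ 1 := by
  refine ContinuousLinearMap.opNorm_le_bound _ zero_le_one fun w => ?_
  rw [one_mul, EuclideanSpace.norm_eq, EuclideanSpace.norm_eq]
  refine Real.sqrt_le_sqrt ?_
  simp only [Real.norm_eq_abs, sq_abs, softmaxJacobian_apply]
  exact sum_sq_mul_sub_sum_mul_le_sum_sq _ _ (softmax_nonneg x) (sum_softmax x)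

theorem norm_softmax_sub_le (x y : EuclideanSpace ℝ ι) :
    ‖WithLp.toLp 2 (softmax x) - WithLp.toLp 2 (softmax y)‖ ≤ ‖x - y‖ := by
  have hderiv (z : EuclideanSpace ℝ ι) : HasFDerivWithinAt
      (fun z : EuclideanSpace ℝ ι => WithLp.toLp 2 (softmax z)) (softmaxJacobian z) Set.univ z :=
    (hasFDerivWithinAt_piLp 2).2 fun i => (hasFDerivAt_softmax_apply z i).hasFDerivWithinAt
  simpa using convex_univ.norm_image_sub_le_of_norm_hasFDerivWithin_le
    (fun z _ => hderiv z) (fun z _ => norm_softmaxJacobian_le_one z) (Set.mem_univ y)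
    (Set.mem_univ x)

theorem sum_sq_softmax_sub_le (x y : ι → ℝ) :
    ∑ i, (softmax x i - softmax y i) ^ 2 ≤ ∑ i, (x i - y i) ^ 2 := by
  have h := norm_softmax_sub_le (WithLp.toLp 2 x) (WithLp.toLp 2 y)
  rw [EuclideanSpace.norm_eq, EuclideanSpace.norm_eq, Real.sqrt_le_sqrt_iff (by positivity)] at h
  simpa only [PiLp.sub_apply, PiLp.toLp_apply, Real.norm_eq_abs, sq_abs] using h

end Softmax

theorem exists_sum_div_card_le {ι : Type*} [Fintype ι] [Nonempty ι] (v : ι → ℝ) :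
    ∃ k, (∑ i, v i) / Fintype.card ι ≤ v k := by
  obtain ⟨k, -, hk⟩ := exists_le_of_sum_le univ_nonempty
    (show ∑ _ : ι, (∑ i, v i) / Fintype.card ι ≤ ∑ i, v i by
      rw [sum_const, card_univ, nsmul_eq_mul, mul_div_cancel₀ _ (by positivity)])
  exact ⟨k, hk⟩

theorem sum_subtype_le_sum {ι : Type*} [Fintype ι] (P : ι → Prop) [DecidablePred P] {f : ι → ℝ}
    (hf : ∀ i, 0 ≤ f i) : ∑ i : {i // P i}, f i ≤ ∑ i, f i := by
  rw [← Fintype.sum_subtype_add_sum_subtype P]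
  exact le_add_of_nonneg_right (sum_nonneg fun i _ => hf i)

section EvSoftmax

variable {K : ℕ} (v : Fin K → ℝ)

theorem evSoftmax_of_lt_mean {k : Fin K} (hk : v k < (∑ i, v i) / K) : evSoftmax v k = 0 := by
  simp [evSoftmax, not_le.2 hk]

theorem evSoftmax_eq_softmax (P : Fin K → Prop) [DecidablePred P]
    (hP : ∀ k, P k ↔ (∑ i, v i) / K ≤ v k) (k : {k // P k}) :
    evSoftmax v k = softmax (fun i : {k // P k} => v i) k := by
  simp only [evSoftmax, softmax, ← hP, k.2, if_true]
  rw [← sum_filter, sum_subtype (p := P) _ fun i => by simp]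

theorem sum_sq_evSoftmax_sub_eq (u : Fin K → ℝ) (P : Fin K → Prop) [DecidablePred P]
    (hPv : ∀ k, P k ↔ (∑ i, v i) / K ≤ v k) (hPu : ∀ k, P k ↔ (∑ i, u i) / K ≤ u k) :
    ∑ k, (evSoftmax v k - evSoftmax u k) ^ 2 =
      ∑ k : {k // P k}, (softmax (fun i : {k // P k} => v i) k -
        softmax (fun i : {k // P k} => u i) k) ^ 2 := by
  rw [← Fintype.sum_subtype_add_sum_subtype P]
  have hoff : ∀ k : {k // ¬ P k}, (evSoftmax v k - evSoftmax u k) ^ 2 = 0 := fun k => by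
    rw [evSoftmax_of_lt_mean v (not_le.1 ((hPv k).not.1 k.2)),
      evSoftmax_of_lt_mean u (not_le.1 ((hPu k).not.1 k.2))]
    ring
  simp only [hoff, sum_const_zero, add_zero, evSoftmax_eq_softmax v P hPv,
    evSoftmax_eq_softmax u P hPu]

end EvSoftmax

/-- If `v, u ∈ ℝ^K` have the same ev-softmax support, i.e.
`{k : v k ≥ v̄} = {k : u k ≥ ū}`, then
`‖EvSoftmax(v) - EvSoftmax(u)‖₂ ≤ ‖v - u‖₂` (Euclidean norm):
ev-softmax is 1-Lipschitz on each set of inputs sharing a common support. -/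
theorem evSoftmax_lipschitz_on_common_support
    (K : ℕ) (hK : 0 < K) (v u : Fin K → ℝ)
    (hsupp : {k : Fin K | (∑ i : Fin K, v i) / K ≤ v k}
           = {k : Fin K | (∑ i : Fin K, u i) / K ≤ u k}) :
    Real.sqrt (∑ k : Fin K, (evSoftmax v k - evSoftmax u k) ^ 2)
      ≤ Real.sqrt (∑ k : Fin K, (v k - u k) ^ 2) := by
  let P : Fin K → Prop := fun k => (∑ i, v i) / K ≤ v k
  have hPu : ∀ k, P k ↔ (∑ i, u i) / K ≤ u k := Set.ext_iff.1 hsupp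
  have : Nonempty (Fin K) := ⟨⟨0, hK⟩⟩
  obtain ⟨k, hk⟩ := exists_sum_div_card_le v
  rw [Fintype.card_fin] at hk
  have : Nonempty {k // P k} := ⟨⟨k, hk⟩⟩
  refine Real.sqrt_le_sqrt ?_
  calc ∑ k, (evSoftmax v k - evSoftmax u k) ^ 2
      = ∑ k : {k // P k}, (softmax (fun i : {k // P k} => v i) k -
          softmax (fun i : {k // P k} => u i) k) ^ 2 :=
        sum_sq_evSoftmax_sub_eq v u P (fun _ => Iff.rfl) hPu
    _ ≤ ∑ k : {k // P k}, (v k - u k) ^ 2 := sum_sq_softmax_sub_le _ _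
    _ ≤ ∑ k, (v k - u k) ^ 2 :=
        sum_subtype_le_sum P (f := fun k => (v k - u k) ^ 2) fun _ => sq_nonneg _
end
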